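/- Let V be a type of nodes, s : V → ℝ a function with s(v) > 0 for every v, adj : V → V → Prop a symmetric adjacency relation, and d_max : ℝ. Define d(i,j) = 1/s(i) if i = j, d(i,j) = max(1/s(i), 1/s(j)) if i ≠ j and adj(i,j), and d(i,j) = d_max otherwise. For ε > 0, let G_Morse(ε) be the simple graph on V joining distinct nodes i, j exactly when adj(i,j), s(i) ≥ ε, and s(j) ≥ ε, and let G_Rips(δ) be the simple graph on V joining distinct nodes i, j exactly when d(i,j) ≤ δ. Then for every ε > 0 with 1/ε < d_max and every pair of nodes u, v ∈ V, u and v are connected by a path in G_Morse(ε) if and only if u and v are connected by a path in G_Rips(1/ε). In particular, the connected components (clusters) of the Morse filtration at threshold ε coincide with the connected components of the Rips-like filtration at threshold 1/ε. -/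

import Mathlib

/-!
At threshold `1 / ε` an edge `i ~ j` of the Rips-like filtration can only come from an adjacent
pair, since every other pair is at distance `dmax > 1 / ε`; for an adjacent pair,
`max (1 / s i) (1 / s j) ≤ 1 / ε` says exactly that both `i` and `j` lie in the level set
`{s ≥ ε}`. So the two graphs coincide, and in particular have the same connected components.
-/

theorem max_one_div_le_one_div_iff {a b ε : ℝ} (ha : 0 < a) (hb : 0 < b) (hε : 0 < ε) :
    max (1 / a) (1 / b) ≤ 1 / ε ↔ ε ≤ a ∧ ε ≤ b := by
  rw [max_le_iff, one_div_le_one_div ha hε, one_div_le_one_div hb hε]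

theorem stmt_8_general {V : Type*} (s : V → ℝ) (hs : ∀ v, 0 < s v)
    (adj : V → V → Prop)
    (dmax : ℝ)
    (d : V → V → ℝ)
    (hd_adj : ∀ i j : V, i ≠ j → adj i j → d i j = max (1 / s i) (1 / s j))
    (hd_far : ∀ i j : V, i ≠ j → ¬ adj i j → d i j = dmax)
    (ε : ℝ) (hε : 0 < ε) (hεd : 1 / ε < dmax)
    (GMorse GRips : SimpleGraph V)
    (hGM : ∀ i j : V, GMorse.Adj i j ↔ i ≠ j ∧ adj i j ∧ ε ≤ s i ∧ ε ≤ s j)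
    (hGR : ∀ i j : V, GRips.Adj i j ↔ i ≠ j ∧ d i j ≤ 1 / ε) :
    ∀ u v : V, GMorse.Reachable u v ↔ GRips.Reachable u v := by
  have hMorse_eq_Rips : GMorse = GRips := by
    ext i j
    rw [hGM, hGR]
    by_cases hij : i = j
    · simp [hij]
    by_cases ha : adj i j
    · rw [hd_adj i j hij ha, max_one_div_le_one_div_iff (hs i) (hs j) hε]
      simp [hij, ha]
    · rw [hd_far i j hij ha]
      simpa [hij, ha] using hεd
  intro u v
  rw [hMorse_eq_Rips]

theorem stmt_8 {V : Type*} (s : V → ℝ) (hs : ∀ v, 0 < s v)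
    (adj : V → V → Prop) (hadj : Symmetric adj)
    (dmax : ℝ)
    (d : V → V → ℝ)
    (hd_self : ∀ i, d i i = 1 / s i)
    (hd_adj : ∀ i j : V, i ≠ j → adj i j → d i j = max (1 / s i) (1 / s j))
    (hd_far : ∀ i j : V, i ≠ j → ¬ adj i j → d i j = dmax)
    (ε : ℝ) (hε : 0 < ε) (hεd : 1 / ε < dmax)
    (GMorse GRips : SimpleGraph V)
    (hGM : ∀ i j : V, GMorse.Adj i j ↔ i ≠ j ∧ adj i j ∧ ε ≤ s i ∧ ε ≤ s j)
    (hGR : ∀ i j : V, GRips.Adj i j ↔ i ≠ j ∧ d i j ≤ 1 / ε) :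
    ∀ u v : V, GMorse.Reachable u v ↔ GRips.Reachable u v :=
  stmt_8_general s hs adj dmax d hd_adj hd_far ε hε hεd GMorse GRips hGM hGR
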